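/- arXiv:1504.04591 — 2 statements merged into one kernel-verified Lean document; each statement's English description precedes it below -/
import Mathlib

section
/- Given any finite family of bounded nondecreasing functions ν_{ij} : [0,∞) → ℝ with total variation one and any δ > 0, there exists a continuous nonincreasing function g : (-∞,0] → [1,∞) with g(0)=1 and g(s) → ∞ as s → -∞ such that ∫_0^∞ g(-s) dν_{ij}(s) < 1 + δ for all i,j. -/
/-!
Choose thresholds `a k ≥ k` beyond which every `ν i j` has mass less than `ε k`, where
`∑ ε k < δ`, and let `u = ∑ₖ rampₖ`, with `rampₖ` rising from `0` at `a k` to `1` at `a k + 1`.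
Near any point only finitely many ramps are nonzero, so `u` is continuous and nondecreasing,
vanishes on `(-∞, 0]` and tends to `∞`, while `∫ u dν ≤ ∑ₖ ν [a k, ∞) < δ`.
Then `g s = 1 + u (-s)`.
-/

open MeasureTheory Filter Set Topology ENNReal

theorem tendsto_measure_Ici_atTop {α : Type*} [LinearOrder α] [NoMaxOrder α]
    [TopologicalSpace α] [ClosedIciTopology α] [MeasurableSpace α] [OpensMeasurableSpace α]
    [(atTop : Filter α).IsCountablyGenerated] (μ : Measure α) [IsFiniteMeasure μ] :
    Tendsto (fun x => μ (Ici x)) atTop (𝓝 0) := by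
  have hempty : ⋂ x : α, Ici x = ∅ :=
    eq_empty_of_forall_notMem fun x hx => by
      obtain ⟨y, hy⟩ := exists_gt x
      exact (mem_iInter.1 hx y).not_gt hy
  refine .of_neBot_imp fun h => ?_
  obtain ⟨x⟩ := (atTop_neBot_iff.1 h).1
  have := tendsto_measure_iInter_atTop (μ := μ)
    (fun x => measurableSet_Ici.nullMeasurableSet) antitone_Ici ⟨x, measure_ne_top μ _⟩
  rwa [hempty, measure_empty] at this

def ramp (a t : ℝ) : ℝ := max 0 (min 1 (t - a))

section Ramp

variable {a t : ℝ}

theorem continuous_ramp (a : ℝ) : Continuous (ramp a) := by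
  unfold ramp; fun_prop

theorem monotone_ramp (a : ℝ) : Monotone (ramp a) := fun _ _ h =>
  max_le_max le_rfl (min_le_min le_rfl (sub_le_sub_right h a))

theorem ramp_nonneg (a t : ℝ) : 0 ≤ ramp a t := le_max_left _ _

theorem ramp_le_one (a t : ℝ) : ramp a t ≤ 1 := max_le zero_le_one (min_le_left _ _)

theorem ramp_eq_zero (h : t ≤ a) : ramp a t = 0 :=
  max_eq_left ((min_le_right _ _).trans (sub_nonpos.2 h))

theorem ramp_eq_one (h : a + 1 ≤ t) : ramp a t = 1 := by
  rw [ramp, min_eq_left (by linarith), max_eq_right zero_le_one]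

theorem ofReal_ramp_le_indicator_Ici (a t : ℝ) :
    ENNReal.ofReal (ramp a t) ≤ (Ici a).indicator 1 t := by
  by_cases h : a ≤ t
  · simpa [h] using ramp_le_one a t
  · simp [h, ramp_eq_zero (le_of_not_ge h)]

theorem lintegral_ofReal_ramp_le (μ : Measure ℝ) (a : ℝ) :
    ∫⁻ t, ENNReal.ofReal (ramp a t) ∂μ ≤ μ (Ici a) := by
  calc ∫⁻ t, ENNReal.ofReal (ramp a t) ∂μ ≤ ∫⁻ t, (Ici a).indicator 1 t ∂μ :=
        lintegral_mono (ofReal_ramp_le_indicator_Ici a)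
    _ = μ (Ici a) := lintegral_indicator_one measurableSet_Ici

end Ramp

noncomputable def rampSum (a : ℕ → ℝ) (t : ℝ) : ℝ := ∑' k, ramp (a k) t

section RampSum

variable {a : ℕ → ℝ}

theorem ramp_eq_zero_of_le_nat (ha : ∀ k : ℕ, (k : ℝ) ≤ a k) {t : ℝ} {N k : ℕ} (ht : t ≤ N)
    (hk : N ≤ k) : ramp (a k) t = 0 :=
  ramp_eq_zero (ht.trans ((Nat.cast_le.2 hk).trans (ha k)))

theorem rampSum_eq_sum (ha : ∀ k : ℕ, (k : ℝ) ≤ a k) {t : ℝ} {N : ℕ} (ht : t ≤ N) :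
    rampSum a t = ∑ k ∈ Finset.range N, ramp (a k) t :=
  tsum_eq_sum fun _ hk => ramp_eq_zero_of_le_nat ha ht (by simpa using hk)

theorem summable_ramp (ha : ∀ k : ℕ, (k : ℝ) ≤ a k) (t : ℝ) : Summable fun k => ramp (a k) t :=
  summable_of_ne_finset_zero (s := Finset.range ⌈t⌉₊) fun _ hk =>
    ramp_eq_zero_of_le_nat ha (Nat.le_ceil t) (by simpa using hk)

theorem rampSum_nonneg (a : ℕ → ℝ) (t : ℝ) : 0 ≤ rampSum a t :=
  tsum_nonneg fun k => ramp_nonneg (a k) t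

theorem rampSum_eq_zero (ha : ∀ k : ℕ, (k : ℝ) ≤ a k) {t : ℝ} (ht : t ≤ 0) : rampSum a t = 0 := by
  simpa using rampSum_eq_sum ha (N := 0) (by simpa using ht)

theorem monotone_rampSum (ha : ∀ k : ℕ, (k : ℝ) ≤ a k) : Monotone (rampSum a) := by
  intro x y hxy
  rw [rampSum_eq_sum ha (hxy.trans (Nat.le_ceil y)), rampSum_eq_sum ha (Nat.le_ceil y)]
  exact Finset.sum_le_sum fun k _ => monotone_ramp (a k) hxy

theorem continuous_rampSum (ha : ∀ k : ℕ, (k : ℝ) ≤ a k) : Continuous (rampSum a) := by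
  refine continuous_iff_continuousAt.2 fun t => ?_
  have hsum : ∀ᶠ x in 𝓝 t, ∑ k ∈ Finset.range (⌈t⌉₊ + 1), ramp (a k) x = rampSum a x :=
    eventually_lt_nhds ((Nat.le_ceil t).trans_lt (by norm_cast; omega)) |>.mono fun x hx =>
      (rampSum_eq_sum ha hx.le).symm
  exact (continuous_finsetSum _ fun k _ => continuous_ramp (a k)).continuousAt.congr hsum

theorem tendsto_rampSum_atTop (ha : ∀ k : ℕ, (k : ℝ) ≤ a k) : Tendsto (rampSum a) atTop atTop := by
  refine tendsto_atTop.2 fun b => ?_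
  have hpast : ∀ᶠ t in atTop, ∀ k ∈ Finset.range ⌈b⌉₊, a k + 1 ≤ t :=
    (Finset.range _).eventually_all.2 fun k _ => eventually_ge_atTop _
  refine hpast.mono fun t ht => ?_
  calc b ≤ ⌈b⌉₊ := Nat.le_ceil b
    _ = ∑ k ∈ Finset.range ⌈b⌉₊, ramp (a k) t := by
      simp [Finset.sum_congr rfl fun k hk => ramp_eq_one (ht k hk)]
    _ ≤ rampSum a t :=
      (summable_ramp ha t).sum_le_tsum _ fun k _ => ramp_nonneg (a k) t

theorem lintegral_ofReal_rampSum_le (ha : ∀ k : ℕ, (k : ℝ) ≤ a k) (μ : Measure ℝ) :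
    ∫⁻ t, ENNReal.ofReal (rampSum a t) ∂μ ≤ ∑' k, μ (Ici (a k)) := by
  calc ∫⁻ t, ENNReal.ofReal (rampSum a t) ∂μ = ∫⁻ t, ∑' k, ENNReal.ofReal (ramp (a k) t) ∂μ := by
        simp only [rampSum, ENNReal.ofReal_tsum_of_nonneg (fun k => ramp_nonneg _ _)
          (summable_ramp ha _)]
    _ = ∑' k, ∫⁻ t, ENNReal.ofReal (ramp (a k) t) ∂μ :=
        lintegral_tsum fun k => (continuous_ramp (a k)).measurable.ennreal_ofReal.aemeasurable
    _ ≤ ∑' k, μ (Ici (a k)) := ENNReal.tsum_le_tsum fun k => lintegral_ofReal_ramp_le μ (a k)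

end RampSum

theorem exists_continuous_monotone_tendsto_lintegral_lt {ι : Type*} [Finite ι]
    (μ : ι → Measure ℝ) [∀ i, IsFiniteMeasure (μ i)] {ε : ℝ≥0∞} (hε : ε ≠ 0) :
    ∃ u : ℝ → ℝ, Continuous u ∧ Monotone u ∧ 0 ≤ u ∧ (∀ t ≤ 0, u t = 0) ∧
      Tendsto u atTop atTop ∧ ∀ i, ∫⁻ t, ENNReal.ofReal (u t) ∂μ i < ε := by
  obtain ⟨ε', hε'_pos, hε'_sum⟩ := ENNReal.exists_pos_sum_of_countable' hε ℕ
  have hthreshold : ∀ k : ℕ, ∃ b : ℝ, (∀ i, μ i (Ici b) < ε' k) ∧ (k : ℝ) ≤ b := fun k =>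
    ((eventually_all.2 fun i => (tendsto_measure_Ici_atTop (μ i)).eventually_lt_const
      (hε'_pos k)).and (eventually_ge_atTop (k : ℝ))).exists
  choose a ha_tail ha_ge using hthreshold
  refine ⟨rampSum a, continuous_rampSum ha_ge, monotone_rampSum ha_ge, rampSum_nonneg a,
    fun t => rampSum_eq_zero ha_ge, tendsto_rampSum_atTop ha_ge, fun i => ?_⟩
  calc ∫⁻ t, ENNReal.ofReal (rampSum a t) ∂μ i ≤ ∑' k, μ i (Ici (a k)) :=
        lintegral_ofReal_rampSum_le ha_ge (μ i)
    _ ≤ ∑' k, ε' k := ENNReal.tsum_le_tsum fun k => (ha_tail k i).le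
    _ < ε := hε'_sum

theorem integrable_and_integral_lt_of_lintegral_lt {α : Type*} [MeasurableSpace α]
    {μ : Measure α} {f : α → ℝ} (hf : 0 ≤ f) (hfm : AEStronglyMeasurable f μ) {δ : ℝ}
    (h : ∫⁻ x, ENNReal.ofReal (f x) ∂μ < ENNReal.ofReal δ) :
    Integrable f μ ∧ ∫ x, f x ∂μ < δ := by
  have hf_ae : 0 ≤ᵐ[μ] f := Eventually.of_forall hf
  refine ⟨⟨hfm, (hasFiniteIntegral_iff_ofReal hf_ae).2 (h.trans ofReal_lt_top)⟩, ?_⟩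
  rw [integral_eq_lintegral_of_nonneg_ae hf_ae hfm]
  exact ENNReal.toReal_lt_of_lt_ofReal h

theorem stmt4_general (m n : ℕ) (ν : Fin m → Fin n → Measure ℝ)
    [∀ i j, IsProbabilityMeasure (ν i j)]
    (δ : ℝ) (hδ : 0 < δ) :
    ∃ g : ℝ → ℝ,
      ContinuousOn g (Set.Iic 0) ∧
      AntitoneOn g (Set.Iic 0) ∧
      (∀ s ≤ (0 : ℝ), 1 ≤ g s) ∧
      g 0 = 1 ∧
      Filter.Tendsto g Filter.atBot Filter.atTop ∧
      ∀ i j, Integrable (fun s => g (-s)) (ν i j) ∧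
        ∫ s, g (-s) ∂(ν i j) < 1 + δ := by
  obtain ⟨u, hu_cont, hu_mono, hu_nonneg, hu_zero, hu_tendsto, hu_lintegral⟩ :=
    exists_continuous_monotone_tendsto_lintegral_lt (fun p : Fin m × Fin n => ν p.1 p.2)
      (ENNReal.ofReal_pos.2 hδ).ne'
  refine ⟨fun s => 1 + u (-s), (continuous_const.add (hu_cont.comp continuous_neg)).continuousOn,
    fun x _ y _ hxy => add_le_add_right (hu_mono (neg_le_neg hxy)) 1,
    fun s _ => le_add_of_nonneg_right (hu_nonneg _), by simp [hu_zero],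
    tendsto_atTop_add_const_left _ _ (hu_tendsto.comp tendsto_neg_atBot_atTop), fun i j => ?_⟩
  obtain ⟨hu_int, hu_integral⟩ := integrable_and_integral_lt_of_lintegral_lt hu_nonneg
    hu_cont.aestronglyMeasurable (hu_lintegral (i, j))
  simp only [neg_neg]
  refine ⟨(integrable_const 1).add hu_int, ?_⟩
  rw [integral_add (integrable_const 1) hu_int]
  simpa using hu_integral

/-- Given a finite family of Stieltjes (probability) measures on `[0,∞)` and any
`δ > 0`, there is a continuous nonincreasing `g : (-∞,0] → [1,∞)` with `g 0 = 1`
and `g(s) → ∞` as `s → -∞` such that `∫_0^∞ g(-s) dν_{ij}(s) < 1 + δ` for all `i,j`. -/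
theorem stmt4 (m n : ℕ) (ν : Fin m → Fin n → Measure ℝ)
    [∀ i j, IsProbabilityMeasure (ν i j)]
    (hν : ∀ i j, (ν i j) (Set.Iio 0) = 0)
    (δ : ℝ) (hδ : 0 < δ) :
    ∃ g : ℝ → ℝ,
      ContinuousOn g (Set.Iic 0) ∧
      AntitoneOn g (Set.Iic 0) ∧
      (∀ s ≤ (0 : ℝ), 1 ≤ g s) ∧
      g 0 = 1 ∧
      Filter.Tendsto g Filter.atBot Filter.atTop ∧
      ∀ i j, Integrable (fun s => g (-s)) (ν i j) ∧
        ∫ s, g (-s) ∂(ν i j) < 1 + δ :=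
  stmt4_general m n ν δ hδ
end

section
/- Suppose (H) for fixed L_0 > 0 and q ∈ ℝ^n_{>0}: for each L ≥ L_0, the flow satisfies x(t; Lq) ↓ y*(L) with Lq ≥ y*(L) ≥ y*(L_0) =: y*, the flow is monotone (φ ≤ ψ implies x(t;φ) ≤ x(t;ψ)), and x(t; Mq) < Mq for all t > 0 whenever M ≥ L_0. Define M(L) = inf{M > 0 : y*(L) ≤ Mq}. Then M(L) ≤ L_0 for all L ≥ L_0, and consequently y*(L) = y* for all L ≥ L_0. -/
open Filter

/-- Abstract version of Claim 2 in the proof of Theorem 3.2: for a monotone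
semiflow `Φ` with `Φ(t, Lq) ↓ y*(L)`, `Lq ≥ y*(L) ≥ y* := y*(L₀)`, fixed points
`y*(L)`, and `Φ(t, Mq) < Mq` for `t > 0`, `M ≥ L₀`, the infimum
`M(L) = inf{M > 0 : y*(L) ≤ Mq}` satisfies `M(L) ≤ L₀` and `y*(L) = y*`. -/
theorem stmt15 (n : ℕ) (Φ : ℝ → (Fin n → ℝ) → (Fin n → ℝ))
    (q : Fin n → ℝ) (hq : ∀ i, 0 < q i) (L₀ : ℝ) (hL₀ : 0 < L₀)
    (ystar : ℝ → (Fin n → ℝ))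
    (hconv : ∀ L ≥ L₀, Tendsto (fun t => Φ t (L • q)) atTop (nhds (ystar L)))
    (hdec : ∀ L ≥ L₀, Antitone (fun t => Φ t (L • q)))
    (hbetween : ∀ L ≥ L₀, (∀ i, ystar L i ≤ L * q i) ∧ ∀ i, ystar L₀ i ≤ ystar L i)
    (hfix : ∀ L ≥ L₀, ∀ t ≥ (0 : ℝ), Φ t (ystar L) = ystar L)
    (hmono : ∀ t ≥ (0 : ℝ), ∀ φ ψ : Fin n → ℝ, φ ≤ ψ → Φ t φ ≤ Φ t ψ)
    (hstrict : ∀ M ≥ L₀, ∀ t > (0 : ℝ), ∀ i, Φ t (M • q) i < M * q i)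
    (ML : ℝ → ℝ)
    (hML : ∀ L, ML L = sInf {M : ℝ | 0 < M ∧ ∀ i, ystar L i ≤ M * q i}) :
    ∀ L ≥ L₀, ML L ≤ L₀ ∧ ystar L = ystar L₀ := by

  intro L hL
  set S : Set ℝ := {M : ℝ | 0 < M ∧ ∀ i, ystar L i ≤ M * q i} with hSdef
  have hLpos : 0 < L := lt_of_lt_of_le hL₀ hL
  have hLS : L ∈ S := ⟨hLpos, fun i => (hbetween L hL).1 i⟩
  have hSne : S.Nonempty := ⟨L, hLS⟩
  have hSbdd : BddBelow S := ⟨0, fun M hM => le_of_lt hM.1⟩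
  have hle : ∀ i, ystar L i ≤ sInf S * q i := by
    intro i
    have h1 : ystar L i / q i ≤ sInf S :=
      le_csInf hSne (fun M hM => (div_le_iff₀ (hq i)).mpr (hM.2 i))
    exact (div_le_iff₀ (hq i)).mp h1
  have hMLval : ML L = sInf S := hML L
  have hMLle : ML L ≤ L₀ := by
    rw [hMLval]
    by_contra h
    push_neg at h
    set M := sInf S with hM
    have hMge : L₀ ≤ M := le_of_lt h
    have hMpos : 0 < M := lt_trans hL₀ h
    have h1 : ystar L ≤ Φ 1 (M • q) := by
      have h2 : Φ 1 (ystar L) ≤ Φ 1 (M • q) := by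
        apply hmono 1 (by norm_num)
        intro i
        simpa [smul_eq_mul] using hle i
      rwa [hfix L hL 1 (by norm_num)] at h2
    have hlt : ∀ i, Φ 1 (M • q) i < M * q i := hstrict M hMge 1 one_pos
    set f : Option (Fin n) → ℝ := fun o => o.elim (M / 2) (fun i => Φ 1 (M • q) i / q i) with hf
    have hne : (Finset.univ : Finset (Option (Fin n))).Nonempty := ⟨none, Finset.mem_univ _⟩
    set M' := Finset.univ.sup' hne f with hM'
    have hM'lt : M' < M := by
      rw [hM', Finset.sup'_lt_iff hne]
      rintro (_ | i) _
      · exact half_lt_self hMpos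
      · exact (div_lt_iff₀ (hq i)).mpr (hlt i)
    have hM'pos : 0 < M' :=
      lt_of_lt_of_le (half_pos hMpos) (Finset.le_sup' f (Finset.mem_univ (none : Option (Fin n))))
    have hM'S : M' ∈ S := by
      refine ⟨hM'pos, fun i => ?_⟩
      have h2 : Φ 1 (M • q) i / q i ≤ M' := Finset.le_sup' f (Finset.mem_univ (some i))
      calc ystar L i ≤ Φ 1 (M • q) i := h1 i
        _ ≤ M' * q i := (div_le_iff₀ (hq i)).mp h2
    exact absurd (csInf_le hSbdd hM'S) (not_le.mpr hM'lt)
  refine ⟨hMLle, ?_⟩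
  have hle0 : ystar L ≤ L₀ • q := by
    intro i
    have hsle : sInf S ≤ L₀ := hMLval ▸ hMLle
    calc ystar L i ≤ sInf S * q i := hle i
      _ ≤ L₀ * q i := mul_le_mul_of_nonneg_right hsle (le_of_lt (hq i))
  have hupper : ystar L ≤ ystar L₀ := by
    refine ge_of_tendsto (hconv L₀ le_rfl) ?_
    filter_upwards [eventually_ge_atTop (0 : ℝ)] with t ht
    have h2 : Φ t (ystar L) ≤ Φ t (L₀ • q) := hmono t ht _ _ hle0
    rwa [hfix L hL t ht] at h2
  exact le_antisymm hupper (fun i => (hbetween L hL).2 i)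
end
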